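/- arXiv:1806.11043 — 9 statements merged into one kernel-verified Lean document; each statement's English description precedes it below -/
import Mathlib

section
/- Let α : ℝ → EuclideanSpace ℝ (Fin n) be a smooth curve with ‖α'(s)‖ = 1 for all s. If ‖α(s)‖² = s² + c₁·s + c₂ for constants c₁, c₂ ∈ ℝ and all s, then ⟨α(s), α''(s)⟩ = 0 for all s. -/
open scoped RealInnerProductSpace

theorem stmt_2 (n : ℕ) (α : ℝ → EuclideanSpace ℝ (Fin n))
    (hsmooth : ContDiff ℝ (⊤ : ℕ∞) α)
    (hunit : ∀ s : ℝ, ‖deriv α s‖ = 1)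
    (c₁ c₂ : ℝ)
    (hdist : ∀ s : ℝ, ‖α s‖ ^ 2 = s ^ 2 + c₁ * s + c₂) :
    ∀ s : ℝ, ⟪α s, deriv (deriv α) s⟫ = 0 := by
  have hdiff : Differentiable ℝ α := hsmooth.differentiable (by simp)
  have hsm : ContDiff ℝ (↑(⊤:ℕ∞)) α := hsmooth.of_le (by simp)
  have hdiff' : Differentiable ℝ (deriv α) :=
    ((contDiff_infty_iff_deriv.mp hsm).2).differentiable (by simp)
  have hα : ∀ t, HasDerivAt α (deriv α t) t := fun t => (hdiff t).hasDerivAt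
  have hα' : ∀ t, HasDerivAt (deriv α) (deriv (deriv α) t) t := fun t => (hdiff' t).hasDerivAt
  -- Step 1: ⟪α t, deriv α t⟫ = t + c₁/2
  have step1 : ∀ t : ℝ, ⟪α t, deriv α t⟫ = t + c₁ / 2 := by
    intro t
    have h1 : HasDerivAt (fun u => ⟪α u, α u⟫) (⟪α t, deriv α t⟫ + ⟪deriv α t, α t⟫) t :=
      (hα t).inner ℝ (hα t)
    have heq : (fun u => ⟪α u, α u⟫) = fun u : ℝ => u ^ 2 + c₁ * u + c₂ := by
      funext u
      rw [real_inner_self_eq_norm_sq, ← hdist u]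
    rw [heq] at h1
    have h2 : HasDerivAt (fun u : ℝ => u ^ 2 + c₁ * u + c₂) (2 * t + c₁) t := by
      have := ((hasDerivAt_pow 2 t).add (((hasDerivAt_id t).const_mul c₁))).add_const c₂
      simpa using this
    have h3 := h1.unique h2
    have hc : ⟪deriv α t, α t⟫ = ⟪α t, deriv α t⟫ := real_inner_comm _ _
    linarith
  -- Step 2
  intro s
  have h1 : HasDerivAt (fun u => ⟪α u, deriv α u⟫)
      (⟪α s, deriv (deriv α) s⟫ + ⟪deriv α s, deriv α s⟫) s := (hα s).inner ℝ (hα' s)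
  have heq : (fun u => ⟪α u, deriv α u⟫) = fun u : ℝ => u + c₁ / 2 := funext step1
  rw [heq] at h1
  have h2 : HasDerivAt (fun u : ℝ => u + c₁ / 2) 1 s := (hasDerivAt_id s).add_const _
  have h3 := h1.unique h2
  have h4 : ⟪deriv α s, deriv α s⟫ = 1 := by
    rw [real_inner_self_eq_norm_sq, hunit s]; norm_num
  linarith [h3, h4]
end

section
/- Let α : ℝ → EuclideanSpace ℝ (Fin n) be a smooth curve with ‖α'(s)‖ = 1 and ⟨α(s), α''(s)⟩ = 0 for all s. Then the squared distance function satisfies ‖α(s)‖² = (s + c)² + a² for some constants c ∈ ℝ and a ≥ 0, for all s. -/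
open scoped RealInnerProductSpace

theorem stmt_3 (n : ℕ) (α : ℝ → EuclideanSpace ℝ (Fin n))
    (hsmooth : ContDiff ℝ (⊤ : ℕ∞) α)
    (hunit : ∀ s : ℝ, ‖deriv α s‖ = 1)
    (hrect : ∀ s : ℝ, ⟪α s, deriv (deriv α) s⟫ = 0) :
    ∃ (c a : ℝ), 0 ≤ a ∧ ∀ s : ℝ, ‖α s‖ ^ 2 = (s + c) ^ 2 + a ^ 2 := by
  have hdα : Differentiable ℝ α := hsmooth.differentiable (by simp)
  have hdα' : Differentiable ℝ (deriv α) :=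
    ((contDiff_infty_iff_deriv.mp (hsmooth.of_le (by simp))).2).differentiable (by simp)
  set h : ℝ → ℝ := fun s => ⟪α s, deriv α s⟫ with hh
  set g : ℝ → ℝ := fun s => ⟪α s, α s⟫ with hg
  -- h has derivative 1 everywhere
  have hD : ∀ s, HasDerivAt h 1 s := by
    intro s
    have := HasDerivAt.inner ℝ ((hdα s).hasDerivAt) ((hdα' s).hasDerivAt)
    have e : ⟪α s, deriv (deriv α) s⟫ + ⟪deriv α s, deriv α s⟫ = 1 := by
      rw [hrect s, real_inner_self_eq_norm_sq, hunit s]; ring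
    rw [e] at this
    exact this
  -- hence h s = s + h 0
  have hlin : ∀ s, h s = s + h 0 := by
    intro s
    have hdiff : Differentiable ℝ (fun s => h s - s) := by
      intro x
      exact ((hD x).sub (hasDerivAt_id x)).differentiableAt
    have hz : ∀ x, deriv (fun s => h s - s) x = 0 := by
      intro x
      have := ((hD x).sub (hasDerivAt_id x)).deriv
      rw [sub_self] at this
      exact this
    have := is_const_of_deriv_eq_zero hdiff hz s 0
    simp at this
    linarith
  -- g has derivative 2 * h s everywhere
  have gD : ∀ s, HasDerivAt g (2 * h s) s := by
    intro s
    have := HasDerivAt.inner ℝ ((hdα s).hasDerivAt) ((hdα s).hasDerivAt)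
    have e : ⟪α s, deriv α s⟫ + ⟪deriv α s, α s⟫ = 2 * h s := by
      have hc := real_inner_comm (α s) (deriv α s)
      show ⟪α s, deriv α s⟫ + ⟪deriv α s, α s⟫ = 2 * ⟪α s, deriv α s⟫
      linarith
    rw [e] at this
    exact this
  -- hence g s = s^2 + 2*(h 0)*s + g 0
  have gquad : ∀ s, g s = s ^ 2 + 2 * h 0 * s + g 0 := by
    intro s
    set P : ℝ → ℝ := fun s => s ^ 2 + 2 * h 0 * s with hP
    have hPd : ∀ x : ℝ, HasDerivAt P (2 * h x) x := by
      intro x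
      have : HasDerivAt P (2 * x + 2 * h 0 * 1) x := by
        exact ((hasDerivAt_pow 2 x).congr_deriv (by ring)).add
          ((hasDerivAt_id x).const_mul (2 * h 0))
      rw [hlin x]
      convert this using 1
      ring
    have hdiff : Differentiable ℝ (fun s => g s - P s) := by
      intro x
      exact ((gD x).sub (hPd x)).differentiableAt
    have hz : ∀ x, deriv (fun s => g s - P s) x = 0 := by
      intro x
      have := ((gD x).sub (hPd x)).deriv
      rw [sub_self] at this
      exact this
    have := is_const_of_deriv_eq_zero hdiff hz s 0
    simp only [hP] at this
    nlinarith [this]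
  have hgnorm : ∀ s, g s = ‖α s‖ ^ 2 := fun s => real_inner_self_eq_norm_sq _
  -- constants
  refine ⟨h 0, Real.sqrt (g 0 - (h 0) ^ 2), Real.sqrt_nonneg _, ?_⟩
  have hnn : 0 ≤ g 0 - (h 0) ^ 2 := by
    have := gquad (-(h 0))
    have h0 : 0 ≤ g (-(h 0)) := by rw [hgnorm]; positivity
    nlinarith
  have hsq : Real.sqrt (g 0 - (h 0) ^ 2) ^ 2 = g 0 - (h 0) ^ 2 := Real.sq_sqrt hnn
  intro s
  rw [← hgnorm s, gquad s, hsq]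
  ring
end

section
/- Let α : ℝ → EuclideanSpace ℝ (Fin n) be a smooth curve with ‖α'(s)‖ = 1, ⟨α(s), α''(s)⟩ = 0 for all s, and suppose ‖α(s)‖ is not constant. Then the normal component α^N(s) := α(s) − ⟨α(s), α'(s)⟩·α'(s) has constant norm. -/
open scoped RealInnerProductSpace

theorem stmt_4 (n : ℕ) (α : ℝ → EuclideanSpace ℝ (Fin n))
    (hsmooth : ContDiff ℝ (⊤ : ℕ∞) α)
    (hunit : ∀ s : ℝ, ‖deriv α s‖ = 1)
    (hrect : ∀ s : ℝ, ⟪α s, deriv (deriv α) s⟫ = 0)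
    (hnonconst : ¬ ∃ r : ℝ, ∀ s : ℝ, ‖α s‖ = r) :
    ∃ r : ℝ, ∀ s : ℝ, ‖α s - ⟪α s, deriv α s⟫ • deriv α s‖ = r := by
  have hd1 : Differentiable ℝ α := hsmooth.differentiable (by simp)
  have hd2 : Differentiable ℝ (deriv α) :=
    (contDiff_infty_iff_deriv.mp (hsmooth.of_le (by simp))).2.differentiable (by simp)
  have h1 : ∀ s : ℝ, HasDerivAt α (deriv α s) s := fun s => (hd1 s).hasDerivAt
  have h2 : ∀ s : ℝ, HasDerivAt (deriv α) (deriv (deriv α) s) s :=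
    fun s => (hd2 s).hasDerivAt
  set g : ℝ → ℝ := fun s => ⟪α s, α s⟫ - (⟪α s, deriv α s⟫) ^ 2 with hg
  have hgd : ∀ s : ℝ, HasDerivAt g 0 s := by
    intro s
    have hF : HasDerivAt (fun t => ⟪α t, α t⟫)
        (⟪α s, deriv α s⟫ + ⟪deriv α s, α s⟫) s := (h1 s).inner ℝ (h1 s)
    have hf : HasDerivAt (fun t => ⟪α t, deriv α t⟫)
        (⟪α s, deriv (deriv α) s⟫ + ⟪deriv α s, deriv α s⟫) s := (h1 s).inner ℝ (h2 s)
    have hf2 : HasDerivAt (fun t => (⟪α t, deriv α t⟫) ^ 2)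
        (2 * ⟪α s, deriv α s⟫ ^ (2-1) * (⟪α s, deriv (deriv α) s⟫ + ⟪deriv α s, deriv α s⟫)) s :=
      hf.pow 2
    have := hF.sub hf2
    convert this using 1
    case e'_4 => rfl
    case e'_5 => rfl
    case e'_8 => rfl
    have h1' : ⟪deriv α s, deriv α s⟫ = (1:ℝ) := by
      rw [real_inner_self_eq_norm_sq, hunit s]; norm_num
    rw [hrect s, h1', real_inner_comm (α s) (deriv α s)]
    ring
  have hgc : ∀ s : ℝ, g s = g 0 := by
    intro s
    exact is_const_of_deriv_eq_zero (fun t => (hgd t).differentiableAt)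
      (fun t => (hgd t).deriv) s 0
  refine ⟨Real.sqrt (g 0), fun s => ?_⟩
  have hnorm : ‖α s - ⟪α s, deriv α s⟫ • deriv α s‖ ^ 2 = g s := by
    rw [norm_sub_sq_real, real_inner_smul_right, norm_smul, mul_pow, hunit s]
    simp only [hg, real_inner_self_eq_norm_sq, sq_abs, Real.norm_eq_abs]
    ring
  rw [← hgc s, ← hnorm, Real.sqrt_sq (norm_nonneg _)]
end

section
/- Let ρ : ℝ → ℝ be a positive twice-differentiable function satisfying ρ(t)·ρ''(t) − 2·ρ'(t)² − ρ(t)² = 0 on an open interval I. Then there exist a ∈ ℝ, a ≠ 0, and t₀ ∈ ℝ such that ρ(t) = a / cos(t + t₀) for all t ∈ I. -/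
/-!
The substitution `u = 1 / ρ` linearises the equation: `ρ ρ'' - 2 ρ'² - ρ² = 0` becomes
`u'' = -u`. On an interval, `u = c cos t + d sin t = √(c² + d²) cos (t + t₀)`,
and as `u` does not vanish, `√(c² + d²) ≠ 0`; inverting gives `ρ = a / cos (t + t₀)`.
-/

open Real Set

theorem IsOpen.exists_eq_const_of_hasDerivAt_zero {s : Set ℝ} {f : ℝ → ℝ}
    (hs : IsOpen s) (hs' : IsPreconnected s) (hf : ∀ t ∈ s, HasDerivAt f 0 t) :
    ∃ a, ∀ t ∈ s, f t = a :=
  hs.exists_is_const_of_deriv_eq_zero hs'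
    (fun t ht => (hf t ht).differentiableAt.differentiableWithinAt) (fun t ht => (hf t ht).deriv)

theorem IsOpen.exists_eq_cos_add_sin_of_hasDerivAt {s : Set ℝ} {u u' : ℝ → ℝ}
    (hs : IsOpen s) (hs' : IsPreconnected s) (hu : ∀ t ∈ s, HasDerivAt u (u' t) t)
    (hu' : ∀ t ∈ s, HasDerivAt u' (-u t) t) :
    ∃ c d : ℝ, ∀ t ∈ s, u t = c * cos t + d * sin t := by
  -- `c` and `d` are the Wronskians of `u` against `cos` and `sin`, which are conserved.
  obtain ⟨c, hc⟩ := hs.exists_eq_const_of_hasDerivAt_zero hs'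
    (f := fun t => u t * cos t - u' t * sin t) fun t ht =>
      (((hu t ht).mul (hasDerivAt_cos t)).sub ((hu' t ht).mul (hasDerivAt_sin t))).congr_deriv
        (by ring)
  obtain ⟨d, hd⟩ := hs.exists_eq_const_of_hasDerivAt_zero hs'
    (f := fun t => u t * sin t + u' t * cos t) fun t ht =>
      (((hu t ht).mul (hasDerivAt_sin t)).add ((hu' t ht).mul (hasDerivAt_cos t))).congr_deriv
        (by ring)
  refine ⟨c, d, fun t ht => ?_⟩
  rw [← hc t ht, ← hd t ht]
  linear_combination (-u t) * sin_sq_add_cos_sq t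

theorem exists_mul_cos_add_mul_sin_eq (c d : ℝ) :
    ∃ t₀, ∀ t, c * cos t + d * sin t = √(c ^ 2 + d ^ 2) * cos (t + t₀) := by
  set z : ℂ := ⟨c, -d⟩
  have hz : ‖z‖ = √(c ^ 2 + d ^ 2) := by simp [Complex.norm_eq_sqrt_sq_add_sq, z]
  refine ⟨z.arg, fun t => ?_⟩
  have hre := Complex.norm_mul_cos_arg z
  have him := Complex.norm_mul_sin_arg z
  rw [hz] at hre him
  rw [cos_add]
  linear_combination (-cos t) * hre + sin t * him

theorem hasDerivAt_deriv_inv_of_ode {ρ ρ' : ℝ → ℝ} {t ρ'' : ℝ}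
    (hd1 : HasDerivAt ρ (ρ' t) t) (hd2 : HasDerivAt ρ' ρ'' t) (hρ : ρ t ≠ 0)
    (hode : ρ t * ρ'' - 2 * ρ' t ^ 2 - ρ t ^ 2 = 0) :
    HasDerivAt (fun s => -ρ' s / ρ s ^ 2) (-(ρ t)⁻¹) t := by
  refine (hd2.neg.div (hd1.pow 2) (pow_ne_zero 2 hρ)).congr_deriv ?_
  simp only [Pi.pow_apply, Pi.neg_apply]
  field_simp
  linear_combination (-ρ t) * hode

theorem stmt_6 (x y : ℝ) (ρ ρ' ρ'' : ℝ → ℝ)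
    (hpos : ∀ t ∈ Set.Ioo x y, 0 < ρ t)
    (hd1 : ∀ t ∈ Set.Ioo x y, HasDerivAt ρ (ρ' t) t)
    (hd2 : ∀ t ∈ Set.Ioo x y, HasDerivAt ρ' (ρ'' t) t)
    (hode : ∀ t ∈ Set.Ioo x y, ρ t * ρ'' t - 2 * (ρ' t) ^ 2 - (ρ t) ^ 2 = 0) :
    ∃ (a t₀ : ℝ), a ≠ 0 ∧ ∀ t ∈ Set.Ioo x y, ρ t = a / Real.cos (t + t₀) := by
  rcases (Ioo x y).eq_empty_or_nonempty with he | ⟨t₁, ht₁⟩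
  · exact ⟨1, 0, one_ne_zero, by simp [he]⟩
  have hne : ∀ t ∈ Ioo x y, ρ t ≠ 0 := fun t ht => (hpos t ht).ne'
  obtain ⟨c, d, hu⟩ := isOpen_Ioo.exists_eq_cos_add_sin_of_hasDerivAt isPreconnected_Ioo
    (u := fun t => (ρ t)⁻¹) (fun t ht => (hd1 t ht).inv (hne t ht))
    fun t ht => hasDerivAt_deriv_inv_of_ode (hd1 t ht) (hd2 t ht) (hne t ht) (hode t ht)
  obtain ⟨t₀, ht₀⟩ := exists_mul_cos_add_mul_sin_eq c d
  have hr : √(c ^ 2 + d ^ 2) ≠ 0 := by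
    intro hr
    have h := hu t₁ ht₁
    rw [ht₀, hr, zero_mul] at h
    exact inv_ne_zero (hne t₁ ht₁) h
  refine ⟨(√(c ^ 2 + d ^ 2))⁻¹, t₀, inv_ne_zero hr, fun t ht => ?_⟩
  rw [← inv_inv (ρ t), hu t ht, ht₀, mul_inv, div_eq_mul_inv]
end

section
/- Let κ : I → ℝ be a positive differentiable function on an open interval I satisfying a·(s + c)·κ(s) = (1/κ(s))' for all s ∈ I, where a > 0 and c ∈ ℝ are constants. Then there exists b ∈ ℝ such that κ(s) = 1 / √(a·s·(s + 2c) + b) for all s ∈ I (where a·s·(s+2c) + b > 0 on I). -/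
/-!
With `u = 1 / κ` the equation reads `u u' = a (s + c)`, i.e. `(u²)' = (a s (s + 2c))'`, so
`u² - a s (s + 2c)` is a constant `b` on the interval; as `u > 0`, `κ = 1 / √(a s (s + 2c) + b)`.
-/

theorem hasDerivAt_one_div_sq_sub_eq_zero {κ : ℝ → ℝ} {a c s : ℝ} (hκ : κ s ≠ 0)
    (h : HasDerivAt (fun t => 1 / κ t) (a * (s + c) * κ s) s) :
    HasDerivAt (fun t => (1 / κ t) ^ 2 - a * t * (t + 2 * c)) 0 s := by
  have hquad : HasDerivAt (fun t : ℝ => a * t * (t + 2 * c)) (2 * a * (s + c)) s :=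
    (((hasDerivAt_id' s).const_mul a).fun_mul ((hasDerivAt_id' s).add_const (2 * c))).congr_deriv
      (by ring)
  refine ((h.fun_pow 2).sub hquad).congr_deriv ?_
  rw [Nat.cast_ofNat, Nat.add_one_sub_one, pow_one]
  field_simp
  ring

theorem stmt_9_general (x y a c : ℝ) (κ : ℝ → ℝ)
    (hpos : ∀ s ∈ Set.Ioo x y, 0 < κ s)
    (hode : ∀ s ∈ Set.Ioo x y,
      HasDerivAt (fun t => 1 / κ t) (a * (s + c) * κ s) s) :
    ∃ b : ℝ, ∀ s ∈ Set.Ioo x y,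
      0 < a * s * (s + 2 * c) + b ∧
      κ s = 1 / Real.sqrt (a * s * (s + 2 * c) + b) := by
  have hfirst : ∀ s ∈ Set.Ioo x y,
      HasDerivAt (fun t => (1 / κ t) ^ 2 - a * t * (t + 2 * c)) 0 s :=
    fun s hs => hasDerivAt_one_div_sq_sub_eq_zero (hpos s hs).ne' (hode s hs)
  obtain ⟨b, hb⟩ := isOpen_Ioo.exists_is_const_of_deriv_eq_zero isPreconnected_Ioo
    (fun s hs => (hfirst s hs).differentiableAt.differentiableWithinAt)
    (fun s hs => (hfirst s hs).deriv)
  refine ⟨b, fun s hs => ?_⟩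
  have hsq : a * s * (s + 2 * c) + b = (1 / κ s) ^ 2 := by
    rw [← hb s hs]
    ring
  have hκ := hpos s hs
  rw [hsq, Real.sqrt_sq (by positivity), one_div_one_div]
  exact ⟨by positivity, rfl⟩

theorem stmt_9 (x y a c : ℝ) (ha : 0 < a) (κ : ℝ → ℝ)
    (hpos : ∀ s ∈ Set.Ioo x y, 0 < κ s)
    (hode : ∀ s ∈ Set.Ioo x y,
      HasDerivAt (fun t => 1 / κ t) (a * (s + c) * κ s) s) :
    ∃ b : ℝ, ∀ s ∈ Set.Ioo x y,
      0 < a * s * (s + 2 * c) + b ∧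
      κ s = 1 / Real.sqrt (a * s * (s + 2 * c) + b) :=
  stmt_9_general x y a c κ hpos hode
end

section
/- Let κ : I → ℝ be a positive differentiable function on an open interval I with s + c > 0 on I, satisfying a·κ(s) = ((s + c)/κ(s))' for all s ∈ I, where a > 0 and c ∈ ℝ are constants. Then there exists b ∈ ℝ such that κ(s) = (s + c) / √(a·s·(s + 2c) + b) for all s ∈ I. -/
/-! For `f = (s + c)/κ` we have `f κ = s + c`, so `(f²)' = 2 f · aκ = 2a (s + c)`, which is
also the derivative of `a s (s + 2c)`. Hence `f² = a s (s + 2c) + b` on the interval, and since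
`f > 0` we may take square roots. -/

lemma hasDerivAt_sq_of_mul_deriv_eq {f : ℝ → ℝ} {f' s a c : ℝ} (hf : HasDerivAt f f' s)
    (h : f s * f' = a * (s + c)) : HasDerivAt (fun t => f t ^ 2) (2 * a * (s + c)) s :=
  (hf.fun_pow 2).congr_deriv (by push_cast; linear_combination 2 * h)

lemma hasDerivAt_mul_mul_add (a c s : ℝ) :
    HasDerivAt (fun t => a * t * (t + 2 * c)) (2 * a * (s + c)) s :=
  (((hasDerivAt_id' s).const_mul a).fun_mul ((hasDerivAt_id' s).add_const (2 * c))).congr_deriv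
    (by ring)

lemma eq_div_sqrt_of_div_sq_eq {k p q : ℝ} (hk : 0 < k) (hp : 0 < p) (h : (p / k) ^ 2 = q) :
    k = p / Real.sqrt q := by
  rw [← h, Real.sqrt_sq (div_pos hp hk).le, div_div_cancel₀ hp.ne']

theorem stmt_10_general (x y a c : ℝ) (κ : ℝ → ℝ)
    (hpos : ∀ s ∈ Set.Ioo x y, 0 < κ s)
    (hsc : ∀ s ∈ Set.Ioo x y, 0 < s + c)
    (hode : ∀ s ∈ Set.Ioo x y,
      HasDerivAt (fun t => (t + c) / κ t) (a * κ s) s) :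
    ∃ b : ℝ, ∀ s ∈ Set.Ioo x y,
      κ s = (s + c) / Real.sqrt (a * s * (s + 2 * c) + b) := by
  have hsq : ∀ s ∈ Set.Ioo x y,
      HasDerivAt (fun t => ((t + c) / κ t) ^ 2) (2 * a * (s + c)) s := fun s hs =>
    hasDerivAt_sq_of_mul_deriv_eq (hode s hs) (by field_simp [(hpos s hs).ne'])
  obtain ⟨b, hb⟩ := isOpen_Ioo.exists_eq_add_of_deriv_eq isPreconnected_Ioo
    (fun s hs => (hsq s hs).differentiableAt.differentiableWithinAt)
    (fun s _ => (hasDerivAt_mul_mul_add a c s).differentiableAt.differentiableWithinAt)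
    (fun s hs => (hsq s hs).deriv.trans (hasDerivAt_mul_mul_add a c s).deriv.symm)
  exact ⟨b, fun s hs => eq_div_sqrt_of_div_sq_eq (hpos s hs) (hsc s hs) (hb hs)⟩

theorem stmt_10 (x y a c : ℝ) (ha : 0 < a) (κ : ℝ → ℝ)
    (hpos : ∀ s ∈ Set.Ioo x y, 0 < κ s)
    (hsc : ∀ s ∈ Set.Ioo x y, 0 < s + c)
    (hode : ∀ s ∈ Set.Ioo x y,
      HasDerivAt (fun t => (t + c) / κ t) (a * κ s) s) :
    ∃ b : ℝ, ∀ s ∈ Set.Ioo x y,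
      κ s = (s + c) / Real.sqrt (a * s * (s + 2 * c) + b) :=
  stmt_10_general x y a c κ hpos hsc hode
end

section
/- Let μ₁, …, μ_{n-2} : ℝ → ℝ be differentiable functions and κ₃, …, κ_{n-1} : ℝ → ℝ functions satisfying: μ₁' = μ₂·κ₃; μ_{i-1}·κ_{i+1} + μ_i' = μ_{i+1}·κ_{i+2} for i ∈ {2, …, n−3}; and μ_{n-3}·κ_{n-1} + μ_{n-2}' = 0. Then the function s ↦ μ₁(s)² + μ₂(s)² + ⋯ + μ_{n-2}(s)² is constant. -/
/-!
The equations say `μ' = A μ` for the skew-symmetric tridiagonal matrix `A` with off-diagonal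
entries `±κ_{i+2}`, so `(∑ μᵢ²)' = 2 ⟪μ, A μ⟫ = 0`. Concretely, after extending `μ` by zero at
both ends, each `μᵢ μᵢ'` is a difference of consecutive terms `κ_{i+1} μ_{i-1} μᵢ` and the sum
telescopes.
-/

open Finset

theorem sum_mul_skewTridiagonal_eq_zero (N : ℕ) (y c d : ℕ → ℝ) (h0 : y 0 = 0)
    (hN : y (N + 1) = 0)
    (hd : ∀ i ∈ Icc 1 N, d i = c i * y (i + 1) - c (i - 1) * y (i - 1)) :
    ∑ i ∈ Icc 1 N, y i * d i = 0 := by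
  obtain rfl | hpos := N.eq_zero_or_pos
  · simp
  let H : ℕ → ℝ := fun i => c (i - 1) * y (i - 1) * y i
  calc ∑ i ∈ Icc 1 N, y i * d i = ∑ i ∈ Icc 1 N, (H (i + 1) - H i) :=
        sum_congr rfl fun i hi => by rw [hd i hi]; simp only [H, Nat.add_sub_cancel]; ring
    _ = 0 := by rw [sum_Icc_sub hpos]; simp [H, h0, hN]

theorem exists_const_sum_sq_of_sum_mul_deriv_eq_zero {ι : Type*} (t : Finset ι)
    (μ : ι → ℝ → ℝ) (hdiff : ∀ i ∈ t, Differentiable ℝ (μ i))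
    (h : ∀ s, ∑ i ∈ t, μ i s * deriv (μ i) s = 0) :
    ∃ C : ℝ, ∀ s, ∑ i ∈ t, μ i s ^ 2 = C := by
  have hderiv : ∀ s, HasDerivAt (fun s => ∑ i ∈ t, μ i s ^ 2) 0 s := by
    intro s
    refine (HasDerivAt.fun_sum fun i hi => (hdiff i hi s).hasDerivAt.fun_pow 2).congr_deriv ?_
    rw [← mul_zero 2, ← h s, mul_sum]
    exact sum_congr rfl fun i _ => by ring
  exact ⟨_, fun s => is_const_of_deriv_eq_zero (fun s => (hderiv s).differentiableAt)
    (fun s => (hderiv s).deriv) s 0⟩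

theorem stmt_11 (n : ℕ) (hn : 4 ≤ n) (μ κ : ℕ → ℝ → ℝ)
    (hdiff : ∀ i, Differentiable ℝ (μ i))
    (h1 : ∀ s : ℝ, deriv (μ 1) s = μ 2 s * κ 3 s)
    (h2 : ∀ i, 2 ≤ i → i ≤ n - 3 →
      ∀ s : ℝ, μ (i - 1) s * κ (i + 1) s + deriv (μ i) s = μ (i + 1) s * κ (i + 2) s)
    (h3 : ∀ s : ℝ, μ (n - 3) s * κ (n - 1) s + deriv (μ (n - 2)) s = 0) :
    ∃ C : ℝ, ∀ s : ℝ, ∑ i ∈ Finset.Icc 1 (n - 2), (μ i s) ^ 2 = C := by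
  refine exists_const_sum_sq_of_sum_mul_deriv_eq_zero _ μ (fun i _ => hdiff i) fun s => ?_
  let y : ℕ → ℝ := fun i => if i ∈ Icc 1 (n - 2) then μ i s else 0
  have hy : ∀ j, 1 ≤ j → j ≤ n - 2 → y j = μ j s := fun j hj hj' => if_pos (mem_Icc.2 ⟨hj, hj'⟩)
  have hd : ∀ i ∈ Icc 1 (n - 2),
      deriv (μ i) s = κ (i + 2) s * y (i + 1) - κ (i - 1 + 2) s * y (i - 1) := by
    intro i hi
    rw [mem_Icc] at hi
    obtain rfl | hi1 := eq_or_lt_of_le hi.1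
    · rw [hy 2 (by norm_num) (by omega), show y 0 = 0 from if_neg (by simp), h1]
      ring
    obtain rfl | hin := eq_or_lt_of_le hi.2
    · rw [show y (n - 2 + 1) = 0 from if_neg (by simp), hy _ (by omega) (by omega),
        show n - 2 - 1 + 2 = n - 1 by omega, show n - 2 - 1 = n - 3 by omega]
      linarith [h3 s]
    · rw [hy _ (by omega) hin, hy _ (by omega) (by omega), show i - 1 + 2 = i + 1 by omega]
      linarith [h2 i hi1 (by omega) s]
  calc ∑ i ∈ Icc 1 (n - 2), μ i s * deriv (μ i) s
      = ∑ i ∈ Icc 1 (n - 2), y i * deriv (μ i) s :=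
        sum_congr rfl fun i hi => by rw [hy i (mem_Icc.1 hi).1 (mem_Icc.1 hi).2]
    _ = 0 := sum_mul_skewTridiagonal_eq_zero _ y (fun i => κ (i + 2) s) _ (if_neg (by simp))
      (if_neg (by simp)) hd
end

section
/- Define sequences of functions by μ₁(s) = (κ₁/κ₂)(s+c), μ₂(s) = κ₁/(κ₂κ₃), and μ_{i+1}(s) = (μ_{i-1}(s)·κ_{i+1} + μ_i'(s))/κ_{i+2} for i ≥ 2, where κ₁, κ₂, … are nonzero real constants. Then for all m ≥ 1 (with indices in range), μ_{2m-1}(s) = ((κ₁κ₃⋯κ_{2m-1})/(κ₂κ₄⋯κ_{2m}))·(s+c) and μ_{2m}(s) = (∑_{j=1}^{m} (∏_{i=1}^{j} κ_{2i-1} · ∏_{i=j+1}^{m} κ_{2i})²) / (κ₁κ₂⋯κ_{2m+1}). -/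
/-!
Induction on `m`. Since `μ (2m)` is constant, the recurrence at `i = 2m` has no derivative term
and just rescales the affine function `μ (2m-1)`; since `μ (2m+1)` is affine, the recurrence at
`i = 2m+1` adds its slope to the rescaled constant `μ (2m)`. Splitting `κ₁ ⋯ κ_{2m+1}` into its odd
and even factors turns this into `N_{m+1} = N_m κ_{2m+2}² + (κ₁ κ₃ ⋯ κ_{2m+1})²` for the numerator
`N_m` of `μ (2m)`.
-/

open Finset

section ClosedForms

variable {R : Type*}

def oddProd [CommMonoid R] (κ : ℕ → R) (m : ℕ) : R := ∏ i ∈ Icc 1 m, κ (2 * i - 1)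

def evenProd [CommMonoid R] (κ : ℕ → R) (m : ℕ) : R := ∏ i ∈ Icc 1 m, κ (2 * i)

def evenNumer [CommSemiring R] (κ : ℕ → R) (m : ℕ) : R :=
  ∑ j ∈ Icc 1 m, (oddProd κ j * ∏ i ∈ Icc (j + 1) m, κ (2 * i)) ^ 2

@[simp]
lemma oddProd_zero [CommMonoid R] (κ : ℕ → R) : oddProd κ 0 = 1 := prod_empty

@[simp]
lemma evenProd_zero [CommMonoid R] (κ : ℕ → R) : evenProd κ 0 = 1 := prod_empty

@[simp]
lemma evenNumer_zero [CommSemiring R] (κ : ℕ → R) : evenNumer κ 0 = 0 := sum_empty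

lemma oddProd_succ [CommMonoid R] (κ : ℕ → R) (m : ℕ) :
    oddProd κ (m + 1) = oddProd κ m * κ (2 * m + 1) :=
  prod_Icc_succ_top (by omega) _

lemma evenProd_succ [CommMonoid R] (κ : ℕ → R) (m : ℕ) :
    evenProd κ (m + 1) = evenProd κ m * κ (2 * m + 2) :=
  prod_Icc_succ_top (by omega) _

lemma prod_Icc_one_two_mul_add_one [CommMonoid R] (κ : ℕ → R) (m : ℕ) :
    ∏ i ∈ Icc 1 (2 * m + 1), κ i = oddProd κ (m + 1) * evenProd κ m := by
  induction m with
  | zero => simp [oddProd, evenProd]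
  | succ m ih =>
    calc ∏ i ∈ Icc 1 (2 * m + 1 + 1 + 1), κ i
        = (∏ i ∈ Icc 1 (2 * m + 1), κ i) * κ (2 * m + 2) * κ (2 * (m + 1) + 1) := by
          rw [prod_Icc_succ_top (by omega), prod_Icc_succ_top (by omega)]; rfl
      _ = oddProd κ (m + 1) * κ (2 * (m + 1) + 1) * (evenProd κ m * κ (2 * m + 2)) := by
          rw [ih]; ac_rfl
      _ = oddProd κ (m + 1 + 1) * evenProd κ (m + 1) := by
          rw [oddProd_succ κ (m + 1), evenProd_succ]

lemma evenNumer_succ [CommSemiring R] (κ : ℕ → R) (m : ℕ) :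
    evenNumer κ (m + 1) = evenNumer κ m * κ (2 * m + 2) ^ 2 + oddProd κ (m + 1) ^ 2 := by
  have tail_succ : ∀ j ∈ Icc 1 m,
      (oddProd κ j * ∏ i ∈ Icc (j + 1) (m + 1), κ (2 * i)) ^ 2 =
        (oddProd κ j * ∏ i ∈ Icc (j + 1) m, κ (2 * i)) ^ 2 * κ (2 * m + 2) ^ 2 := by
    intro j hj
    rw [prod_Icc_succ_top (by grind), ← mul_assoc, mul_pow]
    rfl
  rw [evenNumer, sum_Icc_succ_top (by omega), sum_congr rfl tail_succ, ← sum_mul,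
    Icc_eq_empty (show ¬m + 1 + 1 ≤ m + 1 by omega), prod_empty, mul_one, evenNumer]

end ClosedForms

section Recurrence

variable {𝕜 : Type*} [NontriviallyNormedField 𝕜] {κ : ℕ → 𝕜} {μ : ℕ → 𝕜 → 𝕜} {i : ℕ}

lemma recurrence_step_of_const
    (hrec : ∀ s, μ (i + 1) s = (μ (i - 1) s * κ (i + 1) + deriv (μ i) s) / κ (i + 2))
    {b : 𝕜} (hb : ∀ s, μ i s = b) (s : 𝕜) :
    μ (i + 1) s = μ (i - 1) s * κ (i + 1) / κ (i + 2) := by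
  rw [hrec, funext hb, deriv_const, add_zero]

lemma recurrence_step_of_affine
    (hrec : ∀ s, μ (i + 1) s = (μ (i - 1) s * κ (i + 1) + deriv (μ i) s) / κ (i + 2))
    {a c : 𝕜} (ha : ∀ s, μ i s = a * (s + c)) (s : 𝕜) :
    μ (i + 1) s = (μ (i - 1) s * κ (i + 1) + a) / κ (i + 2) := by
  have hderiv : HasDerivAt (μ i) a s := by
    simpa [funext ha] using ((hasDerivAt_id s).add_const c).const_mul a
  rw [hrec, hderiv.deriv]

theorem closed_form_of_recurrence (hκ : ∀ i, κ i ≠ 0) {c : 𝕜}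
    (h1 : ∀ s, μ 1 s = κ 1 / κ 2 * (s + c))
    (h2 : ∀ s, μ 2 s = κ 1 / (κ 2 * κ 3))
    (hrec : ∀ i, 2 ≤ i → ∀ s,
      μ (i + 1) s = (μ (i - 1) s * κ (i + 1) + deriv (μ i) s) / κ (i + 2))
    (m : ℕ) (hm : 1 ≤ m) :
    (∀ s, μ (2 * m - 1) s = oddProd κ m / evenProd κ m * (s + c)) ∧
      ∀ s, μ (2 * m) s = evenNumer κ m / (oddProd κ (m + 1) * evenProd κ m) := by
  have hodd_ne : ∀ m, oddProd κ m ≠ 0 := fun m => prod_ne_zero_iff.2 fun i _ => hκ _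
  induction m, hm using Nat.le_induction with
  | base =>
    refine ⟨fun s => by simpa [oddProd, evenProd] using h1 s, fun s => ?_⟩
    simp only [h2, evenNumer_succ, oddProd_succ, evenProd_succ, oddProd_zero, evenProd_zero,
      evenNumer_zero, zero_mul, zero_add]
    field_simp [hκ 1]
  | succ m hm ih =>
    obtain ⟨hodd, heven⟩ := ih
    have hodd_next : ∀ s, μ (2 * m + 1) s = oddProd κ (m + 1) / evenProd κ (m + 1) * (s + c) := by
      intro s
      rw [recurrence_step_of_const (hrec (2 * m) (by omega)) heven, hodd, oddProd_succ,
        evenProd_succ]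
      ring
    refine ⟨by simpa [show 2 * (m + 1) - 1 = 2 * m + 1 by omega] using hodd_next, fun s => ?_⟩
    have hrec' := recurrence_step_of_affine (hrec (2 * m + 1) (by omega)) hodd_next s
    rw [Nat.add_sub_cancel, heven] at hrec'
    rw [show 2 * (m + 1) = 2 * m + 1 + 1 by ring, hrec', evenNumer_succ, oddProd_succ κ (m + 1),
      evenProd_succ, show 2 * (m + 1) + 1 = 2 * m + 1 + 2 by ring]
    field_simp [hodd_ne (m + 1), hκ (2 * m + 2), hκ (2 * m + 1 + 2)]

end Recurrence

theorem stmt_13 (κ : ℕ → ℝ) (hκ : ∀ i, κ i ≠ 0) (c : ℝ) (μ : ℕ → ℝ → ℝ)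
    (h1 : ∀ s : ℝ, μ 1 s = κ 1 / κ 2 * (s + c))
    (h2 : ∀ s : ℝ, μ 2 s = κ 1 / (κ 2 * κ 3))
    (hrec : ∀ i, 2 ≤ i → ∀ s : ℝ,
      μ (i + 1) s = (μ (i - 1) s * κ (i + 1) + deriv (μ i) s) / κ (i + 2)) :
    ∀ m, 1 ≤ m → ∀ s : ℝ,
      μ (2 * m - 1) s =
        (∏ i ∈ Finset.Icc 1 m, κ (2 * i - 1)) / (∏ i ∈ Finset.Icc 1 m, κ (2 * i)) * (s + c) ∧
      μ (2 * m) s =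
        (∑ j ∈ Finset.Icc 1 m,
          ((∏ i ∈ Finset.Icc 1 j, κ (2 * i - 1)) * ∏ i ∈ Finset.Icc (j + 1) m, κ (2 * i)) ^ 2) /
        (∏ i ∈ Finset.Icc 1 (2 * m + 1), κ i) := by
  intro m hm s
  obtain ⟨hodd, heven⟩ := closed_form_of_recurrence hκ h1 h2 hrec m hm
  rw [prod_Icc_one_two_mul_add_one]
  exact ⟨hodd s, heven s⟩
end

section
/- Let y : ℝ → EuclideanSpace ℝ (Fin n) be a smooth curve with ‖y(t)‖ = 1 and ‖y'(t)‖ = 1 for all t, and let ρ(t) = a/cos(t + t₀) with a ≠ 0, on an interval where cos(t + t₀) > 0. Then the curve α(t) = ρ(t)·y(t) satisfies ⟨α(t), α''(t) − (v'(t)/v(t))·α'(t)⟩ = 0 for all t, where v(t) = ‖α'(t)‖. -/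
open scoped RealInnerProductSpace

set_option maxHeartbeats 1000000 in
theorem stmt_14 (n : ℕ) (y : ℝ → EuclideanSpace ℝ (Fin n))
    (hy : ContDiff ℝ (⊤ : ℕ∞) y)
    (hy1 : ∀ t : ℝ, ‖y t‖ = 1)
    (hy2 : ∀ t : ℝ, ‖deriv y t‖ = 1)
    (a t₀ : ℝ) (ha : a ≠ 0)
    (α : ℝ → EuclideanSpace ℝ (Fin n))
    (hα : ∀ t : ℝ, α t = (a / Real.cos (t + t₀)) • y t)
    (v : ℝ → ℝ) (hv : ∀ t : ℝ, v t = ‖deriv α t‖) :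
    ∀ t : ℝ, 0 < Real.cos (t + t₀) →
      ⟪α t, deriv (deriv α) t - (deriv v t / v t) • deriv α t⟫ = 0 := by
  have hdy : ∀ u : ℝ, HasDerivAt y (deriv y u) u := fun u =>
    ((hy.differentiable (by simp)) u).hasDerivAt
  have hy0 : ContDiff ℝ ((⊤:ℕ∞) : WithTop ℕ∞) y := hy.of_le (by simp)
  have hy' : ContDiff ℝ ((⊤:ℕ∞) : WithTop ℕ∞) (deriv y) := (contDiff_infty_iff_deriv.mp hy0).2
  have hdy' : ∀ u : ℝ, HasDerivAt (deriv y) (deriv (deriv y) u) u := fun u =>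
    ((hy'.differentiable (by simp)) u).hasDerivAt
  -- ⟪y, y'⟫ = 0
  have hyy : ∀ u : ℝ, ⟪y u, deriv y u⟫ = 0 := by
    intro u
    have h1 : HasDerivAt (fun u => ⟪y u, y u⟫)
        (⟪y u, deriv y u⟫ + ⟪deriv y u, y u⟫) u :=
      HasDerivAt.inner ℝ (hdy u) (hdy u)
    have h2 : (fun u => ⟪y u, y u⟫ : ℝ → ℝ) = fun _ => (1:ℝ) := by
      funext w
      rw [real_inner_self_eq_norm_sq, hy1 w]; norm_num
    rw [h2] at h1
    have h3 := h1.unique (hasDerivAt_const u 1)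
    have h4 : ⟪y u, deriv y u⟫ = ⟪deriv y u, y u⟫ := real_inner_comm _ _
    linarith
  -- ⟪y, y''⟫ = -1
  have hyy2 : ∀ u : ℝ, ⟪y u, deriv (deriv y) u⟫ = -1 := by
    intro u
    have h1 : HasDerivAt (fun u => ⟪y u, deriv y u⟫)
        (⟪y u, deriv (deriv y) u⟫ + ⟪deriv y u, deriv y u⟫) u :=
      HasDerivAt.inner ℝ (hdy u) (hdy' u)
    have h2 : (fun u => ⟪y u, deriv y u⟫ : ℝ → ℝ) = fun _ => (0:ℝ) := funext hyy
    rw [h2] at h1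
    have h3 := h1.unique (hasDerivAt_const u 0)
    have h4 : ⟪deriv y u, deriv y u⟫ = (1:ℝ) := by
      rw [real_inner_self_eq_norm_sq, hy2 u]; norm_num
    linarith
  -- derivative of cos(u+t₀)
  have hcos : ∀ u : ℝ, HasDerivAt (fun u => Real.cos (u + t₀)) (-Real.sin (u + t₀)) u := by
    intro u
    simpa [Function.comp_def] using ((Real.hasDerivAt_cos (u + t₀)).comp u ((hasDerivAt_id u).add_const t₀))
  have hcos2 : ∀ u : ℝ, HasDerivAt (fun u => (Real.cos (u + t₀))^2)
      (-(2 * Real.cos (u + t₀) * Real.sin (u + t₀))) u := by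
    intro u
    have := ((hcos u).mul (hcos u)).congr_deriv
      (by ring : -Real.sin (u + t₀) * Real.cos (u + t₀) + Real.cos (u + t₀) * -Real.sin (u + t₀)
        = -(2 * Real.cos (u + t₀) * Real.sin (u + t₀)))
    simpa [pow_two, Pi.mul_def] using this
  -- ρ and its derivatives
  have hr : ∀ u : ℝ, Real.cos (u + t₀) ≠ 0 →
      HasDerivAt (fun u => a / Real.cos (u + t₀))
        (a * Real.sin (u + t₀) / (Real.cos (u + t₀))^2) u := by
    intro u hu
    have := (hasDerivAt_const u a).div (hcos u) hu
    refine this.congr_deriv ?_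
    field_simp
    ring
  have hr1 : ∀ u : ℝ, Real.cos (u + t₀) ≠ 0 →
      HasDerivAt (fun u => a * Real.sin (u + t₀) / (Real.cos (u + t₀))^2)
        (a * ((Real.cos (u + t₀))^2 + 2 * (Real.sin (u + t₀))^2) / (Real.cos (u + t₀))^3) u := by
    intro u hu
    have hsin : HasDerivAt (fun u => a * Real.sin (u + t₀)) (a * Real.cos (u + t₀)) u := by
      simpa using (((Real.hasDerivAt_sin (u + t₀)).comp u
        ((hasDerivAt_id u).add_const t₀)).const_mul a)
    have := hsin.div (hcos2 u) (pow_ne_zero 2 hu)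
    refine this.congr_deriv ?_
    field_simp
    ring
  -- first derivative of α on the open set
  have hαd : ∀ u : ℝ, Real.cos (u + t₀) ≠ 0 →
      HasDerivAt α ((a / Real.cos (u + t₀)) • deriv y u
        + (a * Real.sin (u + t₀) / (Real.cos (u + t₀))^2) • y u) u := by
    intro u hu
    have hαe : α = fun u => (a / Real.cos (u + t₀)) • y u := funext hα
    rw [hαe]
    exact (hr u hu).smul (hdy u)
  intro t ht
  have hct : Real.cos (t + t₀) ≠ 0 := ne_of_gt ht
  set c : ℝ := Real.cos (t + t₀) with hcdef
  set s : ℝ := Real.sin (t + t₀) with hsdef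
  have hmempos : ∀ᶠ u in nhds t, 0 < Real.cos (u + t₀) := by
    have hcont : Continuous fun u : ℝ => Real.cos (u + t₀) := by continuity
    have hVpos : IsOpen {u : ℝ | 0 < Real.cos (u + t₀)} := isOpen_Ioi.preimage hcont
    exact hVpos.mem_nhds ht
  -- g1 = deriv α near t
  set g1 : ℝ → EuclideanSpace ℝ (Fin n) := fun u =>
    (a / Real.cos (u + t₀)) • deriv y u
      + (a * Real.sin (u + t₀) / (Real.cos (u + t₀))^2) • y u with hg1def
  have hderiv1 : ∀ u : ℝ, Real.cos (u + t₀) ≠ 0 → deriv α u = g1 u := fun u hu =>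
    (hαd u hu).deriv
  have heq1 : deriv α =ᶠ[nhds t] g1 := hmempos.mono fun u hu => hderiv1 u (ne_of_gt hu)
  -- second derivative
  have hg1d : HasDerivAt g1
      (((a / c) • deriv (deriv y) t + (a * s / c^2) • deriv y t)
        + ((a * s / c^2) • deriv y t
          + (a * (c^2 + 2*s^2) / c^3) • y t)) t :=
    ((hr t hct).smul (hdy' t)).add ((hr1 t hct).smul (hdy t))
  have hα2 : deriv (deriv α) t
      = ((a / c) • deriv (deriv y) t + (a * s / c^2) • deriv y t)
        + ((a * s / c^2) • deriv y t + (a * (c^2 + 2*s^2) / c^3) • y t) := by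
    rw [heq1.deriv_eq]
    exact hg1d.deriv
  -- v near t
  have hnorm : ∀ u : ℝ, 0 < Real.cos (u + t₀) → ‖g1 u‖ = |a| / (Real.cos (u + t₀))^2 := by
    intro u hu
    have h1 : ‖g1 u‖^2 = (|a| / (Real.cos (u + t₀))^2)^2 := by
      rw [← real_inner_self_eq_norm_sq]
      simp only [hg1def, inner_add_left, inner_add_right, real_inner_smul_left,
        real_inner_smul_right]
      have e1 : ⟪y u, y u⟫ = (1:ℝ) := by rw [real_inner_self_eq_norm_sq, hy1 u]; norm_num
      have e2 : ⟪deriv y u, deriv y u⟫ = (1:ℝ) := by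
        rw [real_inner_self_eq_norm_sq, hy2 u]; norm_num
      have e3 : ⟪y u, deriv y u⟫ = (0:ℝ) := hyy u
      have e4 : ⟪deriv y u, y u⟫ = (0:ℝ) := by rw [real_inner_comm]; exact hyy u
      rw [e1, e2, e3, e4]
      have hpy : Real.sin (u + t₀)^2 + Real.cos (u + t₀)^2 = 1 := Real.sin_sq_add_cos_sq _
      have hcu : Real.cos (u + t₀) ≠ 0 := ne_of_gt hu
      rw [div_pow, sq_abs]
      field_simp
      linear_combination hpy
    have h2 : (0:ℝ) ≤ ‖g1 u‖ := norm_nonneg _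
    have h3 : (0:ℝ) ≤ |a| / (Real.cos (u + t₀))^2 := by positivity
    nlinarith [h1, h2, h3]
  have hveq : v =ᶠ[nhds t] fun u => |a| / (Real.cos (u + t₀))^2 := by
    filter_upwards [hmempos] with u hu
    rw [hv u, hderiv1 u (ne_of_gt hu), hnorm u hu]
  have hvt : v t = |a| / c^2 := by
    rw [hv t, hderiv1 t hct, hnorm t ht]
  have hvd : HasDerivAt (fun u => |a| / (Real.cos (u + t₀))^2)
      (2 * |a| * s / c^3) t := by
    have := (hasDerivAt_const t |a|).div (hcos2 t) (pow_ne_zero 2 hct)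
    refine this.congr_deriv ?_
    rw [← hcdef, ← hsdef]
    field_simp
    ring
  have hvderiv : deriv v t = 2 * |a| * s / c^3 := by
    rw [hveq.deriv_eq]
    exact hvd.deriv
  -- final computation
  have hk : deriv v t / v t = 2 * s / c := by
    rw [hvderiv, hvt]
    have hane : |a| ≠ 0 := abs_ne_zero.mpr ha
    field_simp
  rw [hα t, hα2, hderiv1 t hct, hk, hg1def]
  simp only [inner_sub_right, inner_add_right, real_inner_smul_left, real_inner_smul_right,
    smul_add, inner_smul_right]
  have e1 : ⟪y t, y t⟫ = (1:ℝ) := by rw [real_inner_self_eq_norm_sq, hy1 t]; norm_num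
  have e3 : ⟪y t, deriv y t⟫ = (0:ℝ) := hyy t
  have e5 : ⟪y t, deriv (deriv y) t⟫ = (-1:ℝ) := hyy2 t
  rw [e1, e3, e5]
  field_simp
  ring
end
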